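/- Consider the transformed Lorenz 63' system in ℝ³ with coefficients A given by the matrix with rows (a, −a, 0), (a, 1, 0), (0, 0, b), bilinear form B(u,ũ) = (0, (u₁ũ₃ + u₃ũ₁)/2, −(u₁ũ₂ + u₂ũ₁)/2), and constant vector f = (0, 0, c) for some real c, where a ≠ 0 and b are real. Then for every u ∈ ℝ³ with u₁ ≠ 0: (i) any v ∈ ℝ³ satisfying (D⁰v)₁ = (D⁰u)₁, (D¹v)₁ = (D¹u)₁ and (D²v)₁ = (D²u)₁ equals u; and (ii) the gradients at u of the three polynomial functions v ↦ (D⁰v)₁, v ↦ (D¹v)₁, v ↦ (D²v)₁ are linearly independent, i.e. they span ℝ³. -/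

import Mathlib

noncomputable section

/-- The formal time derivatives `D^i v` of a solution of
`dv/dt = -A v - B(v,v) + f` at time `0`. -/
def formalDeriv {E : Type*} [AddCommGroup E] [Module ℝ E]
    (A : E → E) (B : E → E → E) (f : E) : ℕ → E → E
  | 0, v => v
  | 1, v => f - A v - B v v
  | (i + 2), v =>
      -(A (formalDeriv A B f (i + 1) v)) -
        ∑ j ∈ (Finset.range (i + 2)).attach,
          ((i + 1).choose j.1 : ℝ) •
            B (formalDeriv A B f j.1 v) (formalDeriv A B f (i + 1 - j.1) v)
  termination_by i _ => i
  decreasing_by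
  · omega
  · have := Finset.mem_range.mp j.2; omega
  · have := Finset.mem_range.mp j.2; omega

/-- The linear part of the transformed Lorenz 63' system, with rows
`(a, -a, 0)`, `(a, 1, 0)`, `(0, 0, b)`. -/
def lorenz63A (a b : ℝ) : EuclideanSpace ℝ (Fin 3) → EuclideanSpace ℝ (Fin 3) :=
  fun v => (WithLp.equiv 2 (Fin 3 → ℝ)).symm
    ![a * v 0 - a * v 1, a * v 0 + v 1, b * v 2]

/-- The bilinear part of the transformed Lorenz 63' system:
`B(u,ũ) = (0, (u₁ũ₃ + u₃ũ₁)/2, -(u₁ũ₂ + u₂ũ₁)/2)`. -/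
def lorenz63B : EuclideanSpace ℝ (Fin 3) → EuclideanSpace ℝ (Fin 3) →
    EuclideanSpace ℝ (Fin 3) :=
  fun u w => (WithLp.equiv 2 (Fin 3 → ℝ)).symm
    ![0, (u 0 * w 2 + u 2 * w 0) / 2, -((u 0 * w 1 + u 1 * w 0) / 2)]

/-- The constant forcing `(0, 0, c)` of the transformed Lorenz 63' system. -/
def lorenz63f (c : ℝ) : EuclideanSpace ℝ (Fin 3) :=
  (WithLp.equiv 2 (Fin 3 → ℝ)).symm ![0, 0, c]

/-!
With Lean's 0-based coordinates, the first components of `D⁰v`, `D¹v`, `D²v` are `v 0`,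
`a (v 1 - v 0)` and `-(a² + a) v 1 - a v 0 v 2`. This system is triangular: it is solved for
`v 0`, `v 1`, `v 2` in turn, dividing by `a` and then by `a v 0`. For the same reason the gradients
`(1, 0, 0)`, `(-a, a, 0)`, `(-a u 2, -(a² + a), -a u 0)` form a lower triangular matrix with
diagonal `1, a, -a u 0`, which is invertible.
-/

section FormalDeriv

variable {E : Type*} [AddCommGroup E] [Module ℝ E] (A : E → E) (B : E → E → E) (f v : E)

theorem formalDeriv_zero : formalDeriv A B f 0 v = v := by
  rw [formalDeriv]

theorem formalDeriv_one : formalDeriv A B f 1 v = f - A v - B v v := by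
  rw [formalDeriv]

theorem formalDeriv_add_two (i : ℕ) :
    formalDeriv A B f (i + 2) v = -A (formalDeriv A B f (i + 1) v) -
      ∑ j ∈ Finset.range (i + 2), ((i + 1).choose j : ℝ) •
        B (formalDeriv A B f j v) (formalDeriv A B f (i + 1 - j) v) := by
  rw [formalDeriv, Finset.sum_attach (Finset.range (i + 2)) fun j =>
    ((i + 1).choose j : ℝ) • B (formalDeriv A B f j v) (formalDeriv A B f (i + 1 - j) v)]

theorem formalDeriv_two :
    formalDeriv A B f 2 v = -A (formalDeriv A B f 1 v) -
      (B v (formalDeriv A B f 1 v) + B (formalDeriv A B f 1 v) v) := by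
  rw [formalDeriv_add_two A B f v 0]
  simp [Finset.sum_range_succ, formalDeriv_zero]

end FormalDeriv

theorem Matrix.linearIndependent_rows_of_isLowerTriangular {K m : Type*} [Field K] [Fintype m]
    [LinearOrder m] {M : Matrix m m K} (hM : M.IsLowerTriangular) (hdiag : ∀ i, M i i ≠ 0) :
    LinearIndependent K fun i => M i :=
  Matrix.linearIndependent_rows_of_det_ne_zero <| by
    rw [Matrix.det_of_isLowerTriangular M hM]
    exact Finset.prod_ne_zero_iff.2 fun i _ => hdiag i

theorem EuclideanSpace.span_range_eq_top_of_lowerTriangular {𝕜 : Type*} [RCLike 𝕜] {n : ℕ}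
    (g : Fin n → EuclideanSpace 𝕜 (Fin n)) (hg : ∀ i j, i < j → g i j = 0)
    (hdiag : ∀ i, g i i ≠ 0) : Submodule.span 𝕜 (Set.range g) = ⊤ := by
  have hli : LinearIndependent 𝕜 g :=
    LinearIndependent.of_comp (WithLp.linearEquiv 2 𝕜 (Fin n → 𝕜)).toLinearMap
      (Matrix.linearIndependent_rows_of_isLowerTriangular (M := Matrix.of fun i j => g i j)
        hg hdiag)
  exact hli.span_eq_top_of_card_eq_finrank' (by simp)

open scoped InnerProductSpace in
theorem HasFDerivAt.hasGradientAt_of_apply_eq_inner {F : Type*} [NormedAddCommGroup F]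
    [InnerProductSpace ℝ F] [CompleteSpace F] {f : F → ℝ} {L : F →L[ℝ] ℝ} {g u : F}
    (hf : HasFDerivAt f L u) (hL : ∀ y, L y = ⟪g, y⟫_ℝ) : HasGradientAt f g u :=
  hasGradientAt_iff_hasFDerivAt.2 <| hf.congr_fderiv <| ContinuousLinearMap.ext hL

section Lorenz63

variable (a b c : ℝ) (u : EuclideanSpace ℝ (Fin 3))

theorem lorenz63_formalDeriv_one_apply_zero (v : EuclideanSpace ℝ (Fin 3)) :
    formalDeriv (lorenz63A a b) lorenz63B (lorenz63f c) 1 v 0 = a * (v 1 - v 0) := by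
  simp only [formalDeriv_one, lorenz63A, lorenz63B, lorenz63f, WithLp.equiv_symm_apply,
    PiLp.sub_apply, Matrix.cons_val_zero, zero_sub, neg_sub, sub_zero]
  ring

theorem lorenz63_formalDeriv_two_apply_zero (v : EuclideanSpace ℝ (Fin 3)) :
    formalDeriv (lorenz63A a b) lorenz63B (lorenz63f c) 2 v 0 =
      -(a ^ 2 + a) * v 1 - a * (v 0 * v 2) := by
  simp only [formalDeriv_two, formalDeriv_one, lorenz63A, lorenz63B, lorenz63f,
    WithLp.equiv_symm_apply, PiLp.sub_apply, PiLp.neg_apply, PiLp.add_apply, Matrix.cons_val_zero,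
    Matrix.cons_val_one, Matrix.cons_val, zero_sub, neg_sub, sub_zero, add_zero]
  ring

theorem lorenz63_hasGradientAt_formalDeriv_zero_apply_zero :
    HasGradientAt (fun v => formalDeriv (lorenz63A a b) lorenz63B (lorenz63f c) 0 v 0)
      !₂[1, 0, 0] u := by
  simp_rw [formalDeriv_zero]
  refine (PiLp.hasFDerivAt_apply (𝕜 := ℝ) 2 u 0).hasGradientAt_of_apply_eq_inner fun y => ?_
  simp [PiLp.inner_apply, Fin.sum_univ_three]

theorem lorenz63_hasGradientAt_formalDeriv_one_apply_zero :
    HasGradientAt (fun v => formalDeriv (lorenz63A a b) lorenz63B (lorenz63f c) 1 v 0)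
      !₂[-a, a, 0] u := by
  simp_rw [lorenz63_formalDeriv_one_apply_zero]
  have hcoord (i : Fin 3) := PiLp.hasFDerivAt_apply (𝕜 := ℝ) 2 u i
  refine (((hcoord 1).sub (hcoord 0)).const_mul a).hasGradientAt_of_apply_eq_inner fun y => ?_
  simp only [smul_apply, sub_apply, PiLp.proj_apply, smul_eq_mul, PiLp.inner_apply,
    RCLike.inner_apply, Real.ringHom_apply, Fin.sum_univ_three, Matrix.cons_val_zero,
    Matrix.cons_val_one, Matrix.cons_val]
  ring

theorem lorenz63_hasGradientAt_formalDeriv_two_apply_zero :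
    HasGradientAt (fun v => formalDeriv (lorenz63A a b) lorenz63B (lorenz63f c) 2 v 0)
      !₂[-(a * u 2), -(a ^ 2 + a), -(a * u 0)] u := by
  simp_rw [lorenz63_formalDeriv_two_apply_zero]
  have hcoord (i : Fin 3) := PiLp.hasFDerivAt_apply (𝕜 := ℝ) 2 u i
  refine (((hcoord 1).const_mul (-(a ^ 2 + a))).sub (((hcoord 0).mul (hcoord 2)).const_mul a)
    ).hasGradientAt_of_apply_eq_inner fun y => ?_
  simp only [smul_apply, sub_apply, add_apply, PiLp.proj_apply, smul_eq_mul, PiLp.inner_apply,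
    RCLike.inner_apply, Real.ringHom_apply, Fin.sum_univ_three, Matrix.cons_val_zero,
    Matrix.cons_val_one, Matrix.cons_val]
  ring

variable {a u} in
theorem lorenz63_span_gradients_eq_top (ha : a ≠ 0) (hu : u 0 ≠ 0) :
    Submodule.span ℝ (Set.range
      ![!₂[1, 0, 0], !₂[-a, a, 0], !₂[-(a * u 2), -(a ^ 2 + a), -(a * u 0)]]) = ⊤ := by
  refine EuclideanSpace.span_range_eq_top_of_lowerTriangular _ (fun i j hij => ?_) fun i => ?_
  · fin_cases i <;> fin_cases j <;> simp_all
  · fin_cases i <;> simp [ha, hu]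

end Lorenz63

/-- for the transformed Lorenz 63' system, observing the first
coordinate of `D⁰v`, `D¹v`, `D²v` determines the initial condition whenever its
first coordinate is nonzero, and the gradients of these three observed
quantities span `ℝ³`. -/
theorem lorenz63_derivative_conditions (a b c : ℝ) (ha : a ≠ 0)
    (u : EuclideanSpace ℝ (Fin 3)) (hu : u 0 ≠ 0) :
    (∀ v : EuclideanSpace ℝ (Fin 3),
      (∀ i ≤ 2, formalDeriv (lorenz63A a b) lorenz63B (lorenz63f c) i v 0 =
        formalDeriv (lorenz63A a b) lorenz63B (lorenz63f c) i u 0) → v = u) ∧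
    Submodule.span ℝ
      {g : EuclideanSpace ℝ (Fin 3) | ∃ i ≤ 2,
        g = gradient (fun v => formalDeriv (lorenz63A a b) lorenz63B (lorenz63f c) i v 0) u}
      = ⊤ := by
  refine ⟨fun v hv => ?_, eq_top_iff.2 ?_⟩
  · have h0 := hv 0 (by norm_num)
    have h1 := hv 1 (by norm_num)
    have h2 := hv 2 (by norm_num)
    rw [formalDeriv_zero, formalDeriv_zero] at h0
    rw [lorenz63_formalDeriv_one_apply_zero, lorenz63_formalDeriv_one_apply_zero, h0] at h1
    rw [lorenz63_formalDeriv_two_apply_zero, lorenz63_formalDeriv_two_apply_zero, h0] at h2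
    have hv1 : v 1 = u 1 := by linarith [mul_left_cancel₀ ha h1]
    have hv2 : v 2 = u 2 :=
      mul_left_cancel₀ hu <| mul_left_cancel₀ ha <| by rw [hv1] at h2; linarith
    ext i
    fin_cases i <;> assumption
  · rw [← lorenz63_span_gradients_eq_top ha hu]
    refine Submodule.span_mono ?_
    rintro _ ⟨i, rfl⟩
    fin_cases i
    · exact ⟨0, by norm_num,
        (lorenz63_hasGradientAt_formalDeriv_zero_apply_zero a b c u).gradient.symm⟩
    · exact ⟨1, by norm_num,
        (lorenz63_hasGradientAt_formalDeriv_one_apply_zero a b c u).gradient.symm⟩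
    · exact ⟨2, le_rfl,
        (lorenz63_hasGradientAt_formalDeriv_two_apply_zero a b c u).gradient.symm⟩
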